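/- arXiv:2411.11601 — 7 statements merged into one kernel-verified Lean document; each statement's English description precedes it below -/
import Mathlib

section
/- Let F : [0,∞) → ℝ be continuous with |F(x)| < 1 for all x ≥ 0, and set J(x) = ∫₀ˣ 2F(y)/(1−F(y)²) dy and Ξ₋(x) = ∫₀ˣ e^{−J(y)}/(1−F(y)²) dy. For any real constants e₀ and E₀, the functions e(x) = e₀ e^{−J(x)} and E(x) = E₀ + 2 e₀ Ξ₋(x) are differentiable on (0,∞) and satisfy the coupled system F(x) E′(x) + e′(x) = 0 and F(x) e′(x) + E′(x) − 2 e(x) = 0 for all x > 0. (This system is equivalent to the backward equations 0 = (F(x)+1) ∂ₓE(x,+) + E(x,−) − E(x,+) and 0 = (F(x)−1) ∂ₓE(x,−) − E(x,−) + E(x,+) for E(x,±) = E(x) ± e(x).) -/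
open Real Set Filter

/-- With `J(x) = ∫₀ˣ 2F/(1-F²)` and `Ξ₋(x) = ∫₀ˣ e^{-J}/(1-F²)`, the functions
`e(x) = e₀ e^{-J(x)}` and `E(x) = E₀ + 2e₀ Ξ₋(x)` are differentiable on `(0,∞)`
and satisfy `F E' + e' = 0` and `F e' + E' - 2e = 0`. -/
theorem stmt_3 (F J Xm e E : ℝ → ℝ) (e₀ E₀ : ℝ)
    (hFc : ContinuousOn F (Ici (0:ℝ)))
    (hFs : ∀ x ∈ Ici (0:ℝ), |F x| < 1)
    (hJ : ∀ x, J x = ∫ y in (0:ℝ)..x, 2 * F y / (1 - (F y) ^ 2))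
    (hXm : ∀ x, Xm x = ∫ y in (0:ℝ)..x, Real.exp (-(J y)) / (1 - (F y) ^ 2))
    (he : ∀ x, e x = e₀ * Real.exp (-(J x)))
    (hE : ∀ x, E x = E₀ + 2 * e₀ * Xm x) :
    ∀ x > (0:ℝ),
      DifferentiableAt ℝ e x ∧ DifferentiableAt ℝ E x ∧
      F x * deriv E x + deriv e x = 0 ∧
      F x * deriv e x + deriv E x - 2 * e x = 0 := by
  -- Denominator never vanishes on [0, ∞)
  have hD : ∀ y ∈ Ici (0:ℝ), 1 - F y ^ 2 ≠ 0 := by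
    intro y hy
    have h := abs_lt.mp (hFs y hy)
    nlinarith [h.1, h.2]
  set g : ℝ → ℝ := fun y => 2 * F y / (1 - F y ^ 2) with hg_def
  have hg : ContinuousOn g (Ici (0:ℝ)) :=
    (continuousOn_const.mul hFc).div (continuousOn_const.sub (hFc.pow 2)) hD
  have hJfun : J = fun t => ∫ y in (0:ℝ)..t, g y := funext hJ
  -- J is continuous on [0, ∞)
  have hJcont : ContinuousOn J (Ici (0:ℝ)) := by
    intro z hz
    have hz0 : (0:ℝ) ≤ z := hz
    have hsub : Icc (0:ℝ) (z + 1) ⊆ Ici 0 := Icc_subset_Ici_self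
    have hint : MeasureTheory.IntegrableOn g (uIcc (0:ℝ) (z + 1)) := by
      rw [uIcc_of_le (by linarith)]
      exact (hg.mono hsub).integrableOn_compact isCompact_Icc
    have hc : ContinuousOn J (uIcc (0:ℝ) (z + 1)) := by
      rw [hJfun]
      exact intervalIntegral.continuousOn_primitive_interval hint
    have hmem : uIcc (0:ℝ) (z + 1) ∈ nhdsWithin z (Ici 0) := by
      rw [uIcc_of_le (by linarith)]
      exact mem_nhdsWithin.2 ⟨Iio (z + 1), isOpen_Iio, by simp, fun w hw =>
        ⟨hw.2, le_of_lt hw.1⟩⟩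
    exact (hc z (by rw [uIcc_of_le (by linarith)]; exact ⟨hz0, by linarith⟩)).mono_of_mem_nhdsWithin hmem
  set h : ℝ → ℝ := fun y => Real.exp (-(J y)) / (1 - F y ^ 2) with hh_def
  have hh : ContinuousOn h (Ici (0:ℝ)) :=
    (hJcont.neg.rexp).div (continuousOn_const.sub (hFc.pow 2)) hD
  have hXmfun : Xm = fun t => ∫ y in (0:ℝ)..t, h y := funext hXm
  intro x hx
  have hx0 : (0:ℝ) ≤ x := le_of_lt hx
  have hIci : Ici (0:ℝ) ∈ nhds x := Ici_mem_nhds hx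
  have hsubx : uIcc (0:ℝ) x ⊆ Ici 0 := by
    rw [uIcc_of_le hx0]; exact Icc_subset_Ici_self
  have hDx : 1 - F x ^ 2 ≠ 0 := hD x (le_of_lt hx)
  -- derivative of J
  have hJder : HasDerivAt J (g x) x := by
    rw [hJfun]
    exact intervalIntegral.integral_hasDerivAt_right
      ((hg.mono hsubx).intervalIntegrable)
      ((hg.mono Ioi_subset_Ici_self).stronglyMeasurableAtFilter isOpen_Ioi x hx)
      ((hg.continuousAt hIci))
  -- derivative of e
  have heder : HasDerivAt e (e₀ * (Real.exp (-(J x)) * -(g x))) x := by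
    have hefun : e = fun y => e₀ * Real.exp (-(J y)) := funext he
    rw [hefun]
    exact ((hJder.neg).exp).const_mul e₀
  -- derivative of Xm
  have hXder : HasDerivAt Xm (h x) x := by
    rw [hXmfun]
    exact intervalIntegral.integral_hasDerivAt_right
      ((hh.mono hsubx).intervalIntegrable)
      ((hh.mono Ioi_subset_Ici_self).stronglyMeasurableAtFilter isOpen_Ioi x hx)
      ((hh.continuousAt hIci))
  -- derivative of E
  have hEder : HasDerivAt E (2 * e₀ * h x) x := by
    have hEfun : E = fun y => E₀ + 2 * e₀ * Xm y := funext hE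
    rw [hEfun]
    exact (hXder.const_mul (2 * e₀)).const_add E₀
  refine ⟨heder.differentiableAt, hEder.differentiableAt, ?_, ?_⟩
  · rw [heder.deriv, hEder.deriv, hh_def, hg_def]
    field_simp
    ring
  · rw [heder.deriv, hEder.deriv, he x, hh_def, hg_def]
    field_simp
    ring
end

section
/- Let F : [0,∞) → ℝ be continuous with |F(x)| < 1 for all x ≥ 0, and set J(x) = ∫₀ˣ 2F(y)/(1−F(y)²) dy, Ξ₊(x) = ∫₀ˣ e^{J(y)}/(1−F(y)²) dy and Ξ₋(x) = ∫₀ˣ e^{−J(y)}/(1−F(y)²) dy. For any real constants t₀ and T₀, the functions t(x) = t₀ e^{−J(x)} − e^{−J(x)} Ξ₊(x) and T(x) = T₀ + 2 t₀ Ξ₋(x) − 2 ∫₀ˣ Ξ₋′(v) Ξ₊(v) dv + J(x)/2 (where Ξ₋′(v) = e^{−J(v)}/(1−F(v)²)) are differentiable on (0,∞) and satisfy −1 = F(x) T′(x) + t′(x) and 0 = F(x) t′(x) + T′(x) − 2 t(x) for all x > 0. (This is the system −E = F T′ + t′, −e = F t′ + T′ − 2t for the mean exit times in the case of almost-sure exit,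 E ≡ 1 and e ≡ 0.) -/
open Real Set Filter

private lemma prim_cont {f : ℝ → ℝ} (hf : ContinuousOn f (Ici (0:ℝ))) :
    ContinuousOn (fun x => ∫ y in (0:ℝ)..x, f y) (Ici (0:ℝ)) := by
  intro x hx
  have hx0 : (0:ℝ) ≤ x := hx
  have hint : MeasureTheory.IntegrableOn f (uIcc (0:ℝ) (x+1)) := by
    rw [uIcc_of_le (by linarith)]
    exact (hf.mono Icc_subset_Ici_self).integrableOn_Icc
  have hc := intervalIntegral.continuousOn_primitive_interval hint
  have hxmem : x ∈ uIcc (0:ℝ) (x+1) := by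
    rw [uIcc_of_le (by linarith)]; exact ⟨hx0, by linarith⟩
  refine (hc x hxmem).mono_of_mem_nhdsWithin ?_
  rw [uIcc_of_le (by linarith)]
  refine mem_nhdsWithin.mpr ⟨Iio (x+1), isOpen_Iio, by simp, ?_⟩
  rintro y ⟨hy1, hy2⟩
  exact ⟨hy2, le_of_lt hy1⟩

private lemma prim_deriv {f : ℝ → ℝ} (hf : ContinuousOn f (Ici (0:ℝ))) {x : ℝ} (hx : 0 < x) :
    HasDerivAt (fun x => ∫ y in (0:ℝ)..x, f y) (f x) x := by
  refine intervalIntegral.integral_hasDerivAt_right ?_ ?_ ?_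
  · refine (hf.mono ?_).intervalIntegrable
    rw [uIcc_of_le hx.le]
    exact Icc_subset_Ici_self
  · exact (hf.mono (Ioi_subset_Ici le_rfl)).stronglyMeasurableAtFilter isOpen_Ioi x hx
  · exact hf.continuousAt (Ici_mem_nhds hx)

/-- With `J(x) = ∫₀ˣ 2F/(1-F²)`, `Ξ₊(x) = ∫₀ˣ e^{J}/(1-F²)` and
`Ξ₋(x) = ∫₀ˣ e^{-J}/(1-F²)`, the functions
`t(x) = t₀ e^{-J(x)} - e^{-J(x)} Ξ₊(x)` and
`T(x) = T₀ + 2t₀ Ξ₋(x) - 2∫₀ˣ Ξ₋'(v)Ξ₊(v) dv + J(x)/2` are differentiable on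
`(0,∞)` and satisfy `-1 = F T' + t'` and `0 = F t' + T' - 2t`. -/
theorem stmt_4 (F J Xp Xm t T : ℝ → ℝ) (t₀ T₀ : ℝ)
    (hFc : ContinuousOn F (Ici (0:ℝ)))
    (hFs : ∀ x ∈ Ici (0:ℝ), |F x| < 1)
    (hJ : ∀ x, J x = ∫ y in (0:ℝ)..x, 2 * F y / (1 - (F y) ^ 2))
    (hXp : ∀ x, Xp x = ∫ y in (0:ℝ)..x, Real.exp (J y) / (1 - (F y) ^ 2))
    (hXm : ∀ x, Xm x = ∫ y in (0:ℝ)..x, Real.exp (-(J y)) / (1 - (F y) ^ 2))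
    (ht : ∀ x, t x = t₀ * Real.exp (-(J x)) - Real.exp (-(J x)) * Xp x)
    (hT : ∀ x, T x = T₀ + 2 * t₀ * Xm x
        - 2 * (∫ v in (0:ℝ)..x, (Real.exp (-(J v)) / (1 - (F v) ^ 2)) * Xp v)
        + J x / 2) :
    ∀ x > (0:ℝ),
      DifferentiableAt ℝ t x ∧ DifferentiableAt ℝ T x ∧
      -1 = F x * deriv T x + deriv t x ∧
      0 = F x * deriv t x + deriv T x - 2 * t x := by
  -- notation
  have hA : ∀ y ∈ Ici (0:ℝ), (0:ℝ) < 1 - F y ^ 2 := by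
    intro y hy
    have := hFs y hy
    nlinarith [abs_nonneg (F y), sq_abs (F y)]
  have hAne : ∀ y ∈ Ici (0:ℝ), (1 - F y ^ 2) ≠ 0 := fun y hy => (hA y hy).ne'
  have hAc : ContinuousOn (fun y => 1 - F y ^ 2) (Ici (0:ℝ)) :=
    (continuousOn_const.sub ((hFc.pow 2)))
  have hfc : ContinuousOn (fun y => 2 * F y / (1 - F y ^ 2)) (Ici (0:ℝ)) :=
    (continuousOn_const.mul hFc).div hAc hAne
  have hJfun : J = fun x => ∫ y in (0:ℝ)..x, 2 * F y / (1 - F y ^ 2) := funext hJ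
  have hJc : ContinuousOn J (Ici (0:ℝ)) := hJfun ▸ prim_cont hfc
  have hgpc : ContinuousOn (fun y => Real.exp (J y) / (1 - F y ^ 2)) (Ici (0:ℝ)) :=
    (Real.continuous_exp.comp_continuousOn hJc).div hAc hAne
  have hgmc : ContinuousOn (fun y => Real.exp (-(J y)) / (1 - F y ^ 2)) (Ici (0:ℝ)) :=
    (Real.continuous_exp.comp_continuousOn hJc.neg).div hAc hAne
  have hXpfun : Xp = fun x => ∫ y in (0:ℝ)..x, Real.exp (J y) / (1 - F y ^ 2) := funext hXp
  have hXpc : ContinuousOn Xp (Ici (0:ℝ)) := hXpfun ▸ prim_cont hgpc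
  have hhc : ContinuousOn (fun v => (Real.exp (-(J v)) / (1 - F v ^ 2)) * Xp v) (Ici (0:ℝ)) :=
    hgmc.mul hXpc
  intro x hx
  have hxI : x ∈ Ici (0:ℝ) := hx.le
  -- derivatives of the primitives
  have hJd : HasDerivAt J (2 * F x / (1 - F x ^ 2)) x := hJfun ▸ prim_deriv hfc hx
  have hXpd : HasDerivAt Xp (Real.exp (J x) / (1 - F x ^ 2)) x := hXpfun ▸ prim_deriv hgpc hx
  have hXmd : HasDerivAt Xm (Real.exp (-(J x)) / (1 - F x ^ 2)) x :=
    (funext hXm : Xm = _) ▸ prim_deriv hgmc hx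
  have hId : HasDerivAt (fun x => ∫ v in (0:ℝ)..x, (Real.exp (-(J v)) / (1 - F v ^ 2)) * Xp v)
      ((Real.exp (-(J x)) / (1 - F x ^ 2)) * Xp x) x := prim_deriv hhc hx
  -- derivative of e^{-J}
  have hE : HasDerivAt (fun x => Real.exp (-(J x)))
      (Real.exp (-(J x)) * -(2 * F x / (1 - F x ^ 2))) x := hJd.neg.exp
  -- derivative of t
  have htd : HasDerivAt t
      (t₀ * (Real.exp (-(J x)) * -(2 * F x / (1 - F x ^ 2)))
        - ((Real.exp (-(J x)) * -(2 * F x / (1 - F x ^ 2))) * Xp x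
          + Real.exp (-(J x)) * (Real.exp (J x) / (1 - F x ^ 2)))) x := by
    have : t = fun x => t₀ * Real.exp (-(J x)) - Real.exp (-(J x)) * Xp x := funext ht
    rw [this]
    exact (hE.const_mul t₀).sub (hE.mul hXpd)
  -- derivative of T
  have hTd : HasDerivAt T
      (2 * t₀ * (Real.exp (-(J x)) / (1 - F x ^ 2))
        - 2 * ((Real.exp (-(J x)) / (1 - F x ^ 2)) * Xp x)
        + (2 * F x / (1 - F x ^ 2)) / 2) x := by
    have : T = fun x => T₀ + 2 * t₀ * Xm x
        - 2 * (∫ v in (0:ℝ)..x, (Real.exp (-(J v)) / (1 - F v ^ 2)) * Xp v)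
        + J x / 2 := funext hT
    rw [this]
    exact (((hasDerivAt_const x T₀).add (hXmd.const_mul (2 * t₀))).sub
      (hId.const_mul 2)).add (hJd.div_const 2) |>.congr_deriv (by ring)
  have hdt := htd.deriv
  have hdT := hTd.deriv
  have hAne' := hAne x hxI
  have key : Real.exp (-(J x)) * (Real.exp (J x) / (1 - F x ^ 2)) = 1 / (1 - F x ^ 2) := by
    rw [← mul_div_assoc, ← Real.exp_add]; simp
  rw [key] at hdt
  refine ⟨htd.differentiableAt, hTd.differentiableAt, ?_, ?_⟩
  · rw [hdt, hdT]
    field_simp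
    ring
  · rw [hdt, hdT, ht x]
    field_simp
    ring
end

section
/- Let a > 0 and let F : [0,∞) → ℝ be continuous with |F(x)| < 1 for all x ≥ 0 and periodic with period a. Define J(x) = ∫₀ˣ 2F(y)/(1−F(y)²) dy and, for n ∈ {+1,−1}, Ξₙ(x) = ∫₀ˣ e^{n J(y)}/(1−F(y)²) dy. Assume J(a) ≠ 0. Then for every x ∈ [0,a], every natural number N and each n ∈ {+1,−1}, Ξₙ(x + N a) = ((1 − e^{n N J(a)})/(1 − e^{n J(a)})) · Ξₙ(a) + e^{n N J(a)} · Ξₙ(x). -/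
open Real Set Filter

private lemma primitive_contOn {g : ℝ → ℝ} (hg : ContinuousOn g (Ici 0)) :
    ContinuousOn (fun x => ∫ t in (0:ℝ)..x, g t) (Ici 0) := by
  intro x hx
  have hx0 : (0:ℝ) ≤ x := hx
  have hsub : uIcc (0:ℝ) (x + 1) ⊆ Ici 0 := by
    rw [uIcc_of_le (by linarith)]
    exact Icc_subset_Ici_self
  have hint : MeasureTheory.IntegrableOn g (uIcc (0:ℝ) (x+1)) :=
    (hg.mono hsub).integrableOn_compact isCompact_uIcc
  have h1 := intervalIntegral.continuousOn_primitive_interval hint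
  have hxm : x ∈ uIcc (0:ℝ) (x+1) := by
    rw [uIcc_of_le (by linarith)]; exact ⟨hx0, by linarith⟩
  have h2 : ContinuousWithinAt (fun x => ∫ t in (0:ℝ)..x, g t) (uIcc (0:ℝ) (x+1)) x :=
    h1 x hxm
  apply h2.mono_of_mem_nhdsWithin
  rw [uIcc_of_le (by linarith), show Icc (0:ℝ) (x+1) = Ici 0 ∩ Iic (x+1) by
    rw [Ici_inter_Iic]]
  exact Filter.inter_mem self_mem_nhdsWithin
    (mem_nhdsWithin_of_mem_nhds (Iic_mem_nhds (by linarith)))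

/-- For an `a`-periodic continuous force field with subcritical values and
`J(a) ≠ 0`, with `Ξₙ(x) = ∫₀ˣ e^{nJ}/(1-F²)` (`n = ±1`),
`Ξₙ(x+Na) = ((1-e^{nNJ(a)})/(1-e^{nJ(a)}))·Ξₙ(a) + e^{nNJ(a)}·Ξₙ(x)`
for all `x ∈ [0,a]` and `N ∈ ℕ`. -/
theorem stmt_6 (a n : ℝ) (ha : 0 < a) (hn : n = 1 ∨ n = -1)
    (F J Xi : ℝ → ℝ)
    (hFc : ContinuousOn F (Ici (0:ℝ)))
    (hFs : ∀ x ∈ Ici (0:ℝ), |F x| < 1)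
    (hper : ∀ x ≥ (0:ℝ), F (x + a) = F x)
    (hJ : ∀ x, J x = ∫ y in (0:ℝ)..x, 2 * F y / (1 - (F y) ^ 2))
    (hXi : ∀ x, Xi x = ∫ y in (0:ℝ)..x, Real.exp (n * J y) / (1 - (F y) ^ 2))
    (hJa : J a ≠ 0) :
    ∀ x ∈ Icc (0:ℝ) a, ∀ N : ℕ,
      Xi (x + N * a) =
        ((1 - Real.exp (n * N * J a)) / (1 - Real.exp (n * J a))) * Xi a
          + Real.exp (n * N * J a) * Xi x := by
  -- denominators are nonzero
  have hden : ∀ x ∈ Ici (0:ℝ), (1 : ℝ) - (F x) ^ 2 ≠ 0 := by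
    intro x hx
    have h := hFs x hx
    have : (F x) ^ 2 < 1 := by
      have := abs_nonneg (F x)
      nlinarith [sq_abs (F x)]
    linarith
  set g : ℝ → ℝ := fun y => 2 * F y / (1 - (F y) ^ 2) with hgdef
  have hgc : ContinuousOn g (Ici 0) := by
    exact (continuousOn_const.mul hFc).div
      (continuousOn_const.sub (hFc.pow 2)) hden
  -- J is the primitive of g
  have hJeq : J = fun x => ∫ t in (0:ℝ)..x, g t := by
    funext x; exact hJ x
  have hJc : ContinuousOn J (Ici 0) := by
    rw [hJeq]; exact primitive_contOn hgc
  set h : ℝ → ℝ := fun y => Real.exp (n * J y) / (1 - (F y) ^ 2) with hhdef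
  have hhc : ContinuousOn h (Ici 0) := by
    exact ((continuousOn_const.mul hJc).rexp).div
      (continuousOn_const.sub (hFc.pow 2)) hden
  -- interval integrability on nonneg intervals
  have hint : ∀ (f : ℝ → ℝ), ContinuousOn f (Ici 0) → ∀ u v : ℝ, 0 ≤ u → 0 ≤ v →
      IntervalIntegrable f MeasureTheory.volume u v := by
    intro f hf u v hu hv
    apply ContinuousOn.intervalIntegrable
    apply hf.mono
    rcases le_total u v with huv | huv
    · rw [uIcc_of_le huv]; exact fun t ht => le_trans hu ht.1
    · rw [uIcc_of_ge huv]; exact fun t ht => le_trans hv ht.1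
  -- J additivity over a period
  have hJadd : ∀ x ≥ (0:ℝ), J (x + a) = J a + J x := by
    intro x hx
    have h1 : (∫ t in (0:ℝ)..a, g t) + (∫ t in a..(x+a), g t)
        = ∫ t in (0:ℝ)..(x+a), g t :=
      intervalIntegral.integral_add_adjacent_intervals
        (hint g hgc 0 a le_rfl ha.le) (hint g hgc a (x+a) ha.le (by linarith))
    have h2 : (∫ t in a..(x+a), g t) = ∫ t in (0:ℝ)..x, g (t + a) := by
      rw [intervalIntegral.integral_comp_add_right]
      norm_num
    have h3 : (∫ t in (0:ℝ)..x, g (t + a)) = ∫ t in (0:ℝ)..x, g t := by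
      apply intervalIntegral.integral_congr
      intro t ht
      rw [uIcc_of_le hx] at ht
      simp only [hgdef, hper t ht.1]
    rw [hJ (x + a), hJ x, hJ a, ← h1, h2, h3]
  -- Xi step over one period
  have hXistep : ∀ x ≥ (0:ℝ), Xi (x + a) = Xi a + Real.exp (n * J a) * Xi x := by
    intro x hx
    have h1 : (∫ t in (0:ℝ)..a, h t) + (∫ t in a..(x+a), h t)
        = ∫ t in (0:ℝ)..(x+a), h t :=
      intervalIntegral.integral_add_adjacent_intervals
        (hint h hhc 0 a le_rfl ha.le) (hint h hhc a (x+a) ha.le (by linarith))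
    have h2 : (∫ t in a..(x+a), h t) = ∫ t in (0:ℝ)..x, h (t + a) := by
      rw [intervalIntegral.integral_comp_add_right]
      norm_num
    have h3 : (∫ t in (0:ℝ)..x, h (t + a))
        = ∫ t in (0:ℝ)..x, Real.exp (n * J a) * h t := by
      apply intervalIntegral.integral_congr
      intro t ht
      rw [uIcc_of_le hx] at ht
      simp only [hhdef, hper t ht.1, hJadd t ht.1]
      rw [mul_add, Real.exp_add, mul_div_assoc]
    have h4 : (∫ t in (0:ℝ)..x, Real.exp (n * J a) * h t)
        = Real.exp (n * J a) * ∫ t in (0:ℝ)..x, h t := by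
      rw [intervalIntegral.integral_const_mul]
    rw [hXi (x + a), hXi x, hXi a, ← h1, h2, h3, h4]
  -- exp(n J a) ≠ 1
  have hne : Real.exp (n * J a) ≠ 1 := by
    rw [Ne, Real.exp_eq_one_iff]
    rcases hn with rfl | rfl <;> simpa using hJa
  -- main induction
  intro x hx N
  induction N with
  | zero => simp
  | succ N ih =>
    have hxN : 0 ≤ x + N * a := by
      have : (0:ℝ) ≤ N * a := by positivity
      linarith [hx.1]
    have hstep := hXistep (x + N * a) hxN
    have hcast : ((N : ℝ) + 1) = ((N + 1 : ℕ) : ℝ) := by push_cast; ring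
    have harr : x + ((N + 1 : ℕ) : ℝ) * a = (x + N * a) + a := by push_cast; ring
    rw [harr, hstep, ih]
    have hexp : Real.exp (n * ((N + 1 : ℕ) : ℝ) * J a)
        = Real.exp (n * N * J a) * Real.exp (n * J a) := by
      rw [← Real.exp_add]; push_cast; ring_nf
    rw [hexp]
    have hd : (1 : ℝ) - Real.exp (n * J a) ≠ 0 := sub_ne_zero.mpr (Ne.symm hne)
    field_simp
    ring
end

section
/- Let a > 0 and let F : [0,∞) → ℝ be continuous with |F(x)| < 1 for all x ≥ 0 and periodic with period a. Define J(x) = ∫₀ˣ 2F(y)/(1−F(y)²) dy and Ξ₋(x) = ∫₀ˣ e^{−J(y)}/(1−F(y)²) dy. If J(a) = 0, then Ξ₋(k a) = k · Ξ₋(a) for every natural number k, Ξ₋(a) > 0, and consequently Ξ₋(k a) → ∞ as k → ∞. -/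
open Real Set Filter

/-- For an `a`-periodic continuous force field with subcritical values and
`J(a) = 0`, one has `Ξ₋(ka) = k·Ξ₋(a)` for all `k ∈ ℕ`, `Ξ₋(a) > 0`, and
`Ξ₋(ka) → ∞` as `k → ∞`. -/
theorem stmt_7 (a : ℝ) (ha : 0 < a) (F J Xm : ℝ → ℝ)
    (hFc : ContinuousOn F (Ici (0:ℝ)))
    (hFs : ∀ x ∈ Ici (0:ℝ), |F x| < 1)
    (hper : ∀ x ≥ (0:ℝ), F (x + a) = F x)
    (hJ : ∀ x, J x = ∫ y in (0:ℝ)..x, 2 * F y / (1 - (F y) ^ 2))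
    (hXm : ∀ x, Xm x = ∫ y in (0:ℝ)..x, Real.exp (-(J y)) / (1 - (F y) ^ 2))
    (hJa : J a = 0) :
    (∀ k : ℕ, Xm (k * a) = k * Xm a) ∧
    0 < Xm a ∧
    Tendsto (fun k : ℕ => Xm (k * a)) atTop atTop := by
  set g : ℝ → ℝ := fun y => 2 * F y / (1 - F y ^ 2) with hg
  set h : ℝ → ℝ := fun y => Real.exp (-(J y)) / (1 - F y ^ 2) with hh
  have hden : ∀ x ∈ Ici (0:ℝ), 0 < 1 - F x ^ 2 := by
    intro x hx
    have h1 := hFs x hx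
    have h2 : F x ^ 2 < 1 := by
      nlinarith [sq_abs (F x), abs_nonneg (F x)]
    linarith
  have huIcc : ∀ x y : ℝ, 0 ≤ x → 0 ≤ y → uIcc x y ⊆ Ici (0:ℝ) := by
    intro x y hx hy t ht
    exact le_trans (le_inf hx hy) ht.1
  have hgc : ContinuousOn g (Ici (0:ℝ)) := by
    apply ContinuousOn.div
    · exact continuousOn_const.mul hFc
    · exact continuousOn_const.sub (hFc.pow 2)
    · intro x hx; exact (hden x hx).ne'
  have hgint : ∀ x y : ℝ, 0 ≤ x → 0 ≤ y → IntervalIntegrable g MeasureTheory.volume x y :=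
    fun x y hx hy => (hgc.mono (huIcc x y hx hy)).intervalIntegrable
  -- J is continuous on Ici 0
  have hJcont : ContinuousOn J (Ici (0:ℝ)) := by
    intro x hx
    have hx0 : (0:ℝ) ≤ x := hx
    have hM : ContinuousOn (fun t => ∫ y in (0:ℝ)..t, g y) (uIcc (0:ℝ) (x + 1)) := by
      apply intervalIntegral.continuousOn_primitive_interval
      have : uIcc (0:ℝ) (x+1) ⊆ Ici 0 := huIcc 0 (x+1) le_rfl (by linarith)
      exact (hgc.mono this).integrableOn_compact (by rw [uIcc_of_le (by linarith)]; exact isCompact_Icc)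
    have hJM : ContinuousOn J (uIcc (0:ℝ) (x + 1)) := by
      apply hM.congr
      intro t _; rw [hJ t]
    have hx' : x ∈ uIcc (0:ℝ) (x+1) := by
      rw [uIcc_of_le (by linarith)]; exact ⟨hx0, by linarith⟩
    refine (hJM x hx').mono_of_mem_nhdsWithin ?_
    rw [uIcc_of_le (by linarith)]
    have hsub : Ici (0:ℝ) ∩ Iio (x+1) ⊆ Icc 0 (x+1) := by
      intro t ht; exact ⟨ht.1, le_of_lt ht.2⟩
    exact Filter.mem_of_superset (inter_mem_nhdsWithin _ (Iio_mem_nhds (by linarith))) hsub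
  have hhc : ContinuousOn h (Ici (0:ℝ)) := by
    apply ContinuousOn.div
    · exact Real.continuous_exp.comp_continuousOn hJcont.neg
    · exact continuousOn_const.sub (hFc.pow 2)
    · intro x hx; exact (hden x hx).ne'
  have hhint : ∀ x y : ℝ, 0 ≤ x → 0 ≤ y → IntervalIntegrable h MeasureTheory.volume x y :=
    fun x y hx hy => (hhc.mono (huIcc x y hx hy)).intervalIntegrable
  -- J is a-periodic on Ici 0
  have hJper : ∀ y ≥ (0:ℝ), J (y + a) = J y := by
    intro y hy
    have h1 : J (y + a) = (∫ t in (0:ℝ)..a, g t) + ∫ t in a..(y + a), g t := by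
      rw [hJ]
      exact (intervalIntegral.integral_add_adjacent_intervals (hgint 0 a le_rfl ha.le)
        (hgint a (y + a) ha.le (by linarith))).symm
    have h2 : (∫ t in (0:ℝ)..y, g (t + a)) = ∫ t in a..(y + a), g t := by
      simpa [zero_add, add_comm] using intervalIntegral.integral_comp_add_right g a (a := 0) (b := y)
    have h3 : (∫ t in (0:ℝ)..y, g (t + a)) = ∫ t in (0:ℝ)..y, g t := by
      apply intervalIntegral.integral_congr
      intro t ht
      have ht0 : 0 ≤ t := le_trans (le_inf le_rfl hy) ht.1
      simp only [hg]
      rw [hper t ht0]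
    have h4 : (∫ t in (0:ℝ)..a, g t) = J a := (hJ a).symm
    rw [h1, h4, hJa, ← h2, h3, ← hJ y, zero_add]
  -- h is a-periodic on Ici 0
  have hhper : ∀ y ≥ (0:ℝ), h (y + a) = h y := by
    intro y hy
    simp only [hh]
    rw [hJper y hy, hper y hy]
  have hhperk : ∀ (k : ℕ), ∀ y ≥ (0:ℝ), h (y + k * a) = h y := by
    intro k
    induction k with
    | zero => intro y _; simp
    | succ n ih =>
      intro y hy
      have : y + (n + 1 : ℕ) * a = (y + n * a) + a := by push_cast; ring
      rw [this, hhper (y + n * a) (by positivity), ih y hy]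
  -- main identity
  have hmain : ∀ k : ℕ, Xm (k * a) = k * Xm a := by
    intro k
    induction k with
    | zero => simp [hXm]
    | succ n ih =>
      have hstep : (∫ t in ((n:ℝ) * a)..((n:ℝ) * a + a), h t) = ∫ t in (0:ℝ)..a, h t := by
        have h2 : (∫ t in (0:ℝ)..a, h (t + n * a)) = ∫ t in ((n:ℝ) * a)..(a + n * a), h t := by
          simpa using intervalIntegral.integral_comp_add_right h ((n:ℝ) * a) (a := 0) (b := a)
        have h3 : (∫ t in (0:ℝ)..a, h (t + n * a)) = ∫ t in (0:ℝ)..a, h t := by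
          apply intervalIntegral.integral_congr
          intro t ht
          exact hhperk n t (le_trans (le_inf le_rfl ha.le) ht.1)
        rw [← h3, h2, add_comm a ((n:ℝ) * a)]
      have hsplit : Xm (((n:ℕ) + 1 : ℕ) * a) = Xm ((n:ℝ) * a) + ∫ t in ((n:ℝ) * a)..((n:ℝ) * a + a), h t := by
        have hcast : (((n:ℕ) + 1 : ℕ) : ℝ) * a = (n:ℝ) * a + a := by push_cast; ring
        rw [hXm, hXm, hcast]
        rw [← intervalIntegral.integral_add_adjacent_intervals
          (hhint 0 ((n:ℝ) * a) le_rfl (by positivity))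
          (hhint ((n:ℝ) * a) ((n:ℝ) * a + a) (by positivity) (by positivity))]
      rw [hsplit, ih, hstep, ← hXm a]
      push_cast; ring
  refine ⟨hmain, ?_, ?_⟩
  · have hpos : 0 < Xm a := by
      rw [hXm a]
      apply intervalIntegral.intervalIntegral_pos_of_pos_on (hhint 0 a le_rfl ha.le) _ ha
      intro x hx
      have hx0 : (0:ℝ) ≤ x := hx.1.le
      exact div_pos (Real.exp_pos _) (hden x hx0)
    exact hpos
  · have hpos : 0 < Xm a := by
      rw [hXm a]
      apply intervalIntegral.intervalIntegral_pos_of_pos_on (hhint 0 a le_rfl ha.le) _ ha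
      intro x hx
      exact div_pos (Real.exp_pos _) (hden x hx.1.le)
    have : Tendsto (fun k : ℕ => (k : ℝ) * Xm a) atTop atTop :=
      Tendsto.atTop_mul_const hpos tendsto_natCast_atTop_atTop
    exact this.congr (fun k => (hmain k).symm)
end

section
/- Let a > 0 and let F : [0,∞) → ℝ be continuous with |F(x)| < 1 for all x ≥ 0 and periodic with period a. Define J(x) = ∫₀ˣ 2F(y)/(1−F(y)²) dy and Ξ₋(x) = ∫₀ˣ e^{−J(y)}/(1−F(y)²) dy. If J(a) > 0, then J(b) → +∞ as b → ∞, and Ξ₋(b) → Ξ₋(a)/(1 − e^{−J(a)}) as b → ∞. -/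
open Real Set Filter

/-- For an `a`-periodic continuous force field with subcritical values and
`J(a) > 0`, one has `J(b) → +∞` and `Ξ₋(b) → Ξ₋(a)/(1-e^{-J(a)})` as `b → ∞`. -/
theorem stmt_9 (a : ℝ) (ha : 0 < a) (F J Xm : ℝ → ℝ)
    (hFc : ContinuousOn F (Ici (0:ℝ)))
    (hFs : ∀ x ∈ Ici (0:ℝ), |F x| < 1)
    (hper : ∀ x ≥ (0:ℝ), F (x + a) = F x)
    (hJ : ∀ x, J x = ∫ y in (0:ℝ)..x, 2 * F y / (1 - (F y) ^ 2))
    (hXm : ∀ x, Xm x = ∫ y in (0:ℝ)..x, Real.exp (-(J y)) / (1 - (F y) ^ 2))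
    (hJa : 0 < J a) :
    Tendsto J atTop atTop ∧
    Tendsto Xm atTop (nhds (Xm a / (1 - Real.exp (-(J a))))) := by
  set G : ℝ → ℝ := fun y => 2 * F y / (1 - F y ^ 2) with hGdef
  set H : ℝ → ℝ := fun y => Real.exp (-(J y)) / (1 - F y ^ 2) with hHdef
  have hden : ∀ x ∈ Ici (0:ℝ), (0:ℝ) < 1 - F x ^ 2 := by
    intro x hx
    have h := hFs x hx
    nlinarith [sq_abs (F x), abs_nonneg (F x)]
  have hsub : ∀ x y : ℝ, 0 ≤ x → 0 ≤ y → uIcc x y ⊆ Ici (0:ℝ) := by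
    intro x y hx hy z hz
    exact le_trans (le_min hx hy) hz.1
  have hGc : ContinuousOn G (Ici (0:ℝ)) := by
    apply ContinuousOn.div
    · exact continuousOn_const.mul hFc
    · exact continuousOn_const.sub (hFc.pow 2)
    · intro x hx; exact ne_of_gt (hden x hx)
  have hGint : ∀ x y : ℝ, 0 ≤ x → 0 ≤ y →
      IntervalIntegrable G MeasureTheory.volume x y := by
    intro x y hx hy
    exact (hGc.mono (hsub x y hx hy)).intervalIntegrable
  have hJG : ∀ x, J x = ∫ y in (0:ℝ)..x, G y := fun x => hJ x
  have hXmH : ∀ x, Xm x = ∫ y in (0:ℝ)..x, H y := fun x => hXm x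
  have hJ0 : J 0 = 0 := by rw [hJG]; simp
  have hJshift : ∀ x, 0 ≤ x → J (x + a) = J x + J a := by
    intro x hx
    have h1 : J (x + a) = (∫ y in (0:ℝ)..a, G y) + ∫ y in a..(x + a), G y := by
      rw [hJG]
      exact (intervalIntegral.integral_add_adjacent_intervals (hGint 0 a le_rfl ha.le)
        (hGint a (x + a) ha.le (by linarith))).symm
    have h2 : (∫ y in a..(x + a), G y) = ∫ y in (0:ℝ)..x, G (y + a) := by
      rw [intervalIntegral.integral_comp_add_right]
      norm_num [add_comm]
    have h3 : (∫ y in (0:ℝ)..x, G (y + a)) = ∫ y in (0:ℝ)..x, G y := by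
      apply intervalIntegral.integral_congr
      intro y hy
      have hy0 : 0 ≤ y := le_trans (le_min le_rfl hx) hy.1
      simp only [hGdef]
      rw [hper y hy0]
    rw [h1, h2, h3, ← hJG x, ← hJG a]
    ring
  have hJn : ∀ (n : ℕ) (x : ℝ), 0 ≤ x → J (x + n * a) = J x + n * J a := by
    intro n
    induction n with
    | zero => intro x hx; simp
    | succ n ih =>
      intro x hx
      have h1 : x + ((n + 1 : ℕ) : ℝ) * a = (x + (n : ℝ) * a) + a := by push_cast; ring
      have h2 : 0 ≤ x + (n : ℝ) * a := by positivity
      rw [h1, hJshift _ h2, ih x hx]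
      push_cast; ring
  have hJcont : ∀ b : ℝ, 0 ≤ b → ContinuousOn J (Icc 0 b) := by
    intro b hb
    have hint : MeasureTheory.IntegrableOn G (uIcc 0 b) MeasureTheory.volume := by
      rw [uIcc_of_le hb]
      exact (hGc.mono Icc_subset_Ici_self).integrableOn_Icc
    have h1 := intervalIntegral.continuousOn_primitive_interval (f := G) (a := 0) (b := b)
      (μ := MeasureTheory.volume) hint
    rw [uIcc_of_le hb] at h1
    exact h1.congr fun x _ => hJG x
  have hHc : ∀ b : ℝ, 0 ≤ b → ContinuousOn H (Icc 0 b) := by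
    intro b hb
    apply ContinuousOn.div
    · exact Real.continuous_exp.comp_continuousOn (hJcont b hb).neg
    · exact continuousOn_const.sub ((hFc.mono Icc_subset_Ici_self).pow 2)
    · intro x hx; exact ne_of_gt (hden x (Icc_subset_Ici_self hx))
  have hHint : ∀ x y : ℝ, 0 ≤ x → 0 ≤ y →
      IntervalIntegrable H MeasureTheory.volume x y := by
    intro x y hx hy
    have h1 : uIcc x y ⊆ Icc 0 (max x y) := by
      intro z hz
      exact ⟨le_trans (le_min hx hy) hz.1, hz.2⟩
    exact ((hHc (max x y) (le_trans hx (le_max_left _ _))).mono h1).intervalIntegrable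
  have hHnn : ∀ x ∈ Ici (0:ℝ), 0 ≤ H x := by
    intro x hx
    exact div_nonneg (Real.exp_pos _).le (hden x hx).le
  have hmono : ∀ x y : ℝ, 0 ≤ x → x ≤ y → Xm x ≤ Xm y := by
    intro x y hx hxy
    have hy : 0 ≤ y := le_trans hx hxy
    have h1 : Xm y = Xm x + ∫ t in x..y, H t := by
      rw [hXmH y, hXmH x]
      exact (intervalIntegral.integral_add_adjacent_intervals (hHint 0 x le_rfl hx)
        (hHint x y hx hy)).symm
    have h2 : 0 ≤ ∫ t in x..y, H t :=
      intervalIntegral.integral_nonneg hxy (fun u hu => hHnn u (le_trans hx hu.1))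
    linarith
  set q : ℝ := Real.exp (-(J a)) with hqdef
  have hq0 : (0:ℝ) < q := Real.exp_pos _
  have hq1 : q < 1 := by
    rw [hqdef, Real.exp_lt_one_iff]
    linarith
  have hXshift : ∀ x, 0 ≤ x → Xm (x + a) = Xm a + q * Xm x := by
    intro x hx
    have h1 : Xm (x + a) = (∫ y in (0:ℝ)..a, H y) + ∫ y in a..(x + a), H y := by
      rw [hXmH]
      exact (intervalIntegral.integral_add_adjacent_intervals (hHint 0 a le_rfl ha.le)
        (hHint a (x + a) ha.le (by linarith))).symm
    have h2 : (∫ y in a..(x + a), H y) = ∫ y in (0:ℝ)..x, H (y + a) := by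
      rw [intervalIntegral.integral_comp_add_right]
      norm_num [add_comm]
    have h3 : (∫ y in (0:ℝ)..x, H (y + a)) = ∫ y in (0:ℝ)..x, q * H y := by
      apply intervalIntegral.integral_congr
      intro y hy
      have hy0 : 0 ≤ y := le_trans (le_min le_rfl hx) hy.1
      simp only [hHdef]
      rw [hper y hy0, hJshift y hy0, hqdef, neg_add, Real.exp_add]
      ring
    rw [h1, h2, h3, intervalIntegral.integral_const_mul, ← hXmH x, ← hXmH a]
  set L : ℝ := Xm a / (1 - q) with hLdef
  have hq1' : (0:ℝ) < 1 - q := by linarith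
  have hLfix : Xm a + q * L = L := by
    rw [hLdef]
    field_simp
    ring
  have hXm0 : Xm 0 = 0 := by rw [hXmH]; simp
  have hXn : ∀ n : ℕ, Xm ((n : ℝ) * a) = L * (1 - q ^ n) := by
    intro n
    induction n with
    | zero => simpa using hXm0
    | succ n ih =>
      have h1 : ((n + 1 : ℕ) : ℝ) * a = (n : ℝ) * a + a := by push_cast; ring
      have h2 : 0 ≤ (n : ℝ) * a := by positivity
      rw [h1, hXshift _ h2, ih, pow_succ]
      linear_combination hLfix
  -- Part 1
  obtain ⟨x₀, hx₀, hmin⟩ := isCompact_Icc.exists_isMinOn (f := J) (s := Icc (0:ℝ) a)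
    ⟨0, le_rfl, ha.le⟩ (hJcont a ha.le)
  set m : ℝ := J x₀ with hmdef
  have hm : ∀ x ∈ Icc (0:ℝ) a, m ≤ J x := fun x hx => hmin hx
  have hJlb : ∀ b : ℝ, 0 ≤ b → m + (⌊b / a⌋₊ : ℝ) * J a ≤ J b := by
    intro b hb
    set n := ⌊b / a⌋₊ with hn
    have hna : (n : ℝ) * a ≤ b := by
      have h1 : (n : ℝ) ≤ b / a := Nat.floor_le (div_nonneg hb ha.le)
      have h2 : (b / a) * a = b := by field_simp
      nlinarith
    have hr : 0 ≤ b - (n : ℝ) * a := by linarith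
    have heq : J b = J (b - (n : ℝ) * a) + (n : ℝ) * J a := by
      have := hJn n (b - (n : ℝ) * a) hr
      rw [sub_add_cancel] at this
      exact this
    have hrle : b - (n : ℝ) * a ≤ a := by
      have h2 : b / a < (n : ℝ) + 1 := Nat.lt_floor_add_one _
      have h2' : b < ((n : ℝ) + 1) * a := (div_lt_iff₀ ha).mp h2
      nlinarith
    have h3 := hm (b - (n : ℝ) * a) ⟨hr, hrle⟩
    rw [heq]
    linarith
  have hnfl : Tendsto (fun b : ℝ => ⌊b / a⌋₊) atTop atTop :=
    tendsto_nat_floor_atTop.comp (tendsto_id.atTop_div_const ha)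
  have hfloorR : Tendsto (fun b : ℝ => (⌊b / a⌋₊ : ℝ)) atTop atTop :=
    tendsto_natCast_atTop_atTop.comp hnfl
  have hJtop : Tendsto J atTop atTop := by
    have h1 : Tendsto (fun b : ℝ => m + (⌊b / a⌋₊ : ℝ) * J a) atTop atTop :=
      tendsto_atTop_add_const_left _ m (hfloorR.atTop_mul_const hJa)
    apply tendsto_atTop_mono' atTop ?_ h1
    filter_upwards [eventually_ge_atTop (0:ℝ)] with b hb using hJlb b hb
  -- Part 2
  have hpow : Tendsto (fun n : ℕ => L * (1 - q ^ n)) atTop (nhds L) := by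
    have h0 : Tendsto (fun n : ℕ => (q : ℝ) ^ n) atTop (nhds 0) :=
      tendsto_pow_atTop_nhds_zero_of_lt_one hq0.le hq1
    have h1 : Tendsto (fun n : ℕ => L * (1 - q ^ n)) atTop (nhds (L * (1 - 0))) :=
      Tendsto.const_mul L ((tendsto_const_nhds (x := (1:ℝ))).sub h0)
    simpa using h1
  have hlow : Tendsto (fun b : ℝ => L * (1 - q ^ ⌊b / a⌋₊)) atTop (nhds L) :=
    hpow.comp hnfl
  have hup : Tendsto (fun b : ℝ => L * (1 - q ^ (⌊b / a⌋₊ + 1))) atTop (nhds L) :=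
    hpow.comp ((tendsto_add_atTop_nat 1).comp hnfl)
  have hXtend : Tendsto Xm atTop (nhds L) := by
    apply tendsto_of_tendsto_of_tendsto_of_le_of_le' hlow hup
    · filter_upwards [eventually_ge_atTop (0:ℝ)] with b hb
      rw [← hXn ⌊b / a⌋₊]
      have h1 : (⌊b / a⌋₊ : ℝ) ≤ b / a := Nat.floor_le (div_nonneg hb ha.le)
      have h2 : (b / a) * a = b := by field_simp
      exact hmono _ b (by positivity) (by nlinarith)
    · filter_upwards [eventually_ge_atTop (0:ℝ)] with b hb
      rw [← hXn (⌊b / a⌋₊ + 1)]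
      have h1 : b / a < (⌊b / a⌋₊ : ℝ) + 1 := Nat.lt_floor_add_one _
      have h2 : (b / a) * a = b := by field_simp
      have h3 : b ≤ ((⌊b / a⌋₊ + 1 : ℕ) : ℝ) * a := by push_cast; nlinarith
      exact hmono b _ hb h3
  exact ⟨hJtop, hXtend⟩
end

section
/- Let a > 0 and let F : [0,∞) → ℝ be continuous with |F(x)| < 1 for all x ≥ 0 and periodic with period a, and assume J(a) > 0, where J(x) = ∫₀ˣ 2F(y)/(1−F(y)²) dy and Ξ₋(x) = ∫₀ˣ e^{−J(y)}/(1−F(y)²) dy. Define, for every x ≥ 0 and each sign σ ∈ {+1,−1}, Ê_σ(x) = 1 − (1−e^{−J(a)}) · (1 + 2Ξ₋(x) + σ e^{−J(x)}) / (1 − e^{−J(a)} + 2Ξ₋(a)). Then for every x ∈ [0,a) and every natural number N: Ê_σ(x + N a) = e^{−N J(a)} · [ 2Ξ₋(a) − (1−e^{−J(a)})(2Ξ₋(x) + σ e^{−J(x)}) ] / (1 − e^{−J(a)} + 2Ξ₋(a)). -/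
open Real Set Filter

/-- For an `a`-periodic continuous force field with subcritical values and
`J(a) > 0`, the closed-form exit probability
`Ê_σ(x) = 1 - (1-e^{-J(a)})(1 + 2Ξ₋(x) + σe^{-J(x)})/(1 - e^{-J(a)} + 2Ξ₋(a))`
satisfies, for `x ∈ [0,a)` and `N ∈ ℕ`,
`Ê_σ(x+Na) = e^{-NJ(a)}[2Ξ₋(a) - (1-e^{-J(a)})(2Ξ₋(x)+σe^{-J(x)})]/(1-e^{-J(a)}+2Ξ₋(a))`. -/
theorem stmt_10 (a σ : ℝ) (ha : 0 < a) (hσ : σ = 1 ∨ σ = -1)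
    (F J Xm Ehat : ℝ → ℝ)
    (hFc : ContinuousOn F (Ici (0:ℝ)))
    (hFs : ∀ x ∈ Ici (0:ℝ), |F x| < 1)
    (hper : ∀ x ≥ (0:ℝ), F (x + a) = F x)
    (hJ : ∀ x, J x = ∫ y in (0:ℝ)..x, 2 * F y / (1 - (F y) ^ 2))
    (hXm : ∀ x, Xm x = ∫ y in (0:ℝ)..x, Real.exp (-(J y)) / (1 - (F y) ^ 2))
    (hJa : 0 < J a)
    (hE : ∀ x ≥ (0:ℝ), Ehat x =
      1 - (1 - Real.exp (-(J a))) * (1 + 2 * Xm x + σ * Real.exp (-(J x)))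
        / (1 - Real.exp (-(J a)) + 2 * Xm a)) :
    ∀ x ∈ Ico (0:ℝ) a, ∀ N : ℕ,
      Ehat (x + N * a) =
        Real.exp (-(N * J a)) *
          (2 * Xm a - (1 - Real.exp (-(J a))) * (2 * Xm x + σ * Real.exp (-(J x))))
          / (1 - Real.exp (-(J a)) + 2 * Xm a) := by
  -- notation
  set gg : ℝ → ℝ := fun y => 2 * F y / (1 - F y ^ 2) with hggdef
  set hh : ℝ → ℝ := fun y => Real.exp (-(J y)) / (1 - F y ^ 2) with hhhdef
  set q : ℝ := Real.exp (-(J a)) with hqdef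
  have hq0 : 0 < q := Real.exp_pos _
  have hq1 : q < 1 := by
    rw [hqdef]
    calc Real.exp (-(J a)) < Real.exp 0 := Real.exp_lt_exp.mpr (by linarith)
    _ = 1 := Real.exp_zero
  have h1q : (0:ℝ) < 1 - q := by linarith
  -- positivity of 1 - F^2 on [0,∞)
  have hFpos : ∀ x ∈ Ici (0:ℝ), 0 < 1 - F x ^ 2 := by
    intro x hx
    have h1 := hFs x hx
    have h2 : |F x| * |F x| < 1 * 1 := by
      apply mul_lt_mul'' h1 h1 (abs_nonneg _) (abs_nonneg _)
    have h3 : F x ^ 2 = |F x| * |F x| := by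
      rw [← sq_abs, sq]
    nlinarith
  -- continuity of gg on [0,∞)
  have hggc : ContinuousOn gg (Ici (0:ℝ)) := by
    exact (continuousOn_const.mul hFc).div
      (continuousOn_const.sub (hFc.pow 2)) (fun x hx => (hFpos x hx).ne')
  -- interval integrability of gg between nonneg endpoints
  have hsub : ∀ u v : ℝ, 0 ≤ u → 0 ≤ v → uIcc u v ⊆ Ici (0:ℝ) := by
    intro u v hu hv y hy
    exact le_trans (le_min hu hv) hy.1
  have hggint : ∀ u v : ℝ, 0 ≤ u → 0 ≤ v → IntervalIntegrable gg MeasureTheory.volume u v := by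
    intro u v hu hv
    exact (hggc.mono (hsub u v hu hv)).intervalIntegrable
  -- continuity of J on [0, b]
  have hJfun : J = fun x => ∫ y in (0:ℝ)..x, gg y := funext hJ
  have hJcont : ∀ b : ℝ, 0 ≤ b → ContinuousOn J (Icc 0 b) := by
    intro b hb
    rw [hJfun]
    have := intervalIntegral.continuousOn_primitive_interval
      (a := (0:ℝ)) (b := b) (f := gg) (μ := MeasureTheory.volume)
      ((hggc.mono (hsub 0 b le_rfl hb)).integrableOn_uIcc)
    rwa [uIcc_of_le hb] at this
  -- interval integrability of hh between nonneg endpoints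
  have hhhint : ∀ u v : ℝ, 0 ≤ u → 0 ≤ v → IntervalIntegrable hh MeasureTheory.volume u v := by
    intro u v hu hv
    have hb : (0:ℝ) ≤ max u v := le_trans hu (le_max_left _ _)
    have hc : ContinuousOn hh (Icc 0 (max u v)) := by
      apply ContinuousOn.div
      · exact (Real.continuous_exp.comp_continuousOn (hJcont _ hb).neg)
      · exact (continuousOn_const.sub (hFc.pow 2)).mono
          (fun y hy => hy.1)
      · intro y hy; exact (hFpos y hy.1).ne'
    apply (hc.mono ?_).intervalIntegrable
    intro y hy
    exact ⟨le_trans (le_min hu hv) hy.1, le_trans hy.2 (by simp [max_def, min_def])⟩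
  -- additivity of J
  have hJadd : ∀ x : ℝ, 0 ≤ x → J (x + a) = J x + J a := by
    intro x hx
    have e1 : (∫ y in (0:ℝ)..a, gg y) + (∫ y in a..(x+a), gg y) = ∫ y in (0:ℝ)..(x+a), gg y :=
      intervalIntegral.integral_add_adjacent_intervals (hggint 0 a le_rfl ha.le)
        (hggint a (x+a) ha.le (by linarith))
    have h1 : (∫ y in (0:ℝ)..x, gg (y + a)) = ∫ y in (0+a)..(x+a), gg y :=
      intervalIntegral.integral_comp_add_right gg a
    rw [zero_add] at h1
    have e2 : (∫ y in a..(x+a), gg y) = ∫ y in (0:ℝ)..x, gg y := by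
      rw [← h1]
      apply intervalIntegral.integral_congr
      intro y hy
      rw [uIcc_of_le hx] at hy
      simp only [hggdef, hper y hy.1]
    rw [hJ (x+a), hJ x, hJ a, ← e1, e2]
    ring
  -- recursion for Xm
  have hXadd : ∀ x : ℝ, 0 ≤ x → Xm (x + a) = Xm a + q * Xm x := by
    intro x hx
    have e1 : (∫ y in (0:ℝ)..a, hh y) + (∫ y in a..(x+a), hh y) = ∫ y in (0:ℝ)..(x+a), hh y :=
      intervalIntegral.integral_add_adjacent_intervals (hhhint 0 a le_rfl ha.le)
        (hhhint a (x+a) ha.le (by linarith))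
    have h1 : (∫ y in (0:ℝ)..x, hh (y + a)) = ∫ y in (0+a)..(x+a), hh y :=
      intervalIntegral.integral_comp_add_right hh a
    rw [zero_add] at h1
    have e2 : (∫ y in a..(x+a), hh y) = q * ∫ y in (0:ℝ)..x, hh y := by
      rw [← h1, ← intervalIntegral.integral_const_mul]
      apply intervalIntegral.integral_congr
      intro y hy
      rw [uIcc_of_le hx] at hy
      simp only [hhhdef]
      rw [hper y hy.1, hJadd y hy.1, neg_add, Real.exp_add, hqdef]
      ring
    rw [hXm (x+a), hXm x, hXm a, ← e1, e2]
  -- nonnegativity of Xm a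
  have hXa : 0 ≤ Xm a := by
    rw [hXm]
    apply intervalIntegral.integral_nonneg ha.le
    intro u hu
    exact le_of_lt (div_pos (Real.exp_pos _) (hFpos u hu.1))
  have hD : 1 - q + 2 * Xm a ≠ 0 := by positivity
  -- main induction
  intro x hx N
  obtain ⟨hx0, hxa⟩ := hx
  have key : ∀ n : ℕ, J (x + n * a) = J x + n * J a ∧
      Xm (x + n * a) = Xm a * (1 - q ^ n) / (1 - q) + q ^ n * Xm x := by
    intro n
    induction n with
    | zero => simp
    | succ n ih =>
      have hxn : (0:ℝ) ≤ x + n * a := by positivity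
      have e : x + (n + 1 : ℕ) * a = (x + n * a) + a := by push_cast; ring
      refine ⟨?_, ?_⟩
      · rw [e, hJadd _ hxn, ih.1]; push_cast; ring
      · rw [e, hXadd _ hxn, ih.2]
        field_simp
        ring
  have hxN : (0:ℝ) ≤ x + N * a := by positivity
  have hqN : Real.exp (-(↑N * J a)) = q ^ N := by
    rw [hqdef, ← Real.exp_nat_mul]
    congr 1
    ring
  have hexp : Real.exp (-(J (x + N * a))) = q ^ N * Real.exp (-(J x)) := by
    rw [(key N).1, neg_add, Real.exp_add, ← hqN, neg_mul_eq_mul_neg (N:ℝ) (J a),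
      Real.exp_nat_mul]
    exact mul_comm _ _
  rw [hE _ hxN, (key N).2, hexp, hqN]
  field_simp
  ring
end

section
/- Let a > 0 and let μ, τ be real numbers with |μ + τ| < 1 and |μ − τ| < 1. Define F(x) = μ + τ sin(2πx/a) and J(a) = ∫₀ᵃ 2F(x)/(1−F(x)²) dx. Then J(a) = [ 1/√((1−μ)² − τ²) − 1/√((1+μ)² − τ²) ] · a. In particular, J(a) is positive, zero, or negative according as μ is positive, zero, or negative. -/
/-!
Writing `2F/(1 - F²) = 1/(1 - F) - 1/(1 + F)` and rescaling the period to `2π`, everything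
reduces to `∫₀^{2π} dθ/(c + d sin θ) = 2π/√(c² - d²)` for `|d| < c`. On the unit circle
`z = e^{iθ}` the integrand becomes `z i · (-i/s) ((z - w₁)⁻¹ - (z - w₂)⁻¹)` with
`s = √(c² - d²)`, where `w₁, w₂` are the roots of `d z² + 2icz - d`; exactly one of them,
`w₁ = i(s - c)/d`, lies in the unit disc, so Cauchy's formula gives `2π/s`.
The sign of `J(a)` is that of `((1 + μ)² - τ²) - ((1 - μ)² - τ²) = 4μ`.
-/

open Real Set

section CircleIntegral

open Complex

theorem circleIntegral_sub_inv_of_notMem_closedBall {c w : ℂ} {R : ℝ} (hR : 0 ≤ R)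
    (hw : w ∉ Metric.closedBall c R) : (∮ z in C(c, R), (z - w)⁻¹) = 0 := by
  refine DiffContOnCl.circleIntegral_eq_zero hR (DifferentiableOn.diffContOnCl ?_)
  refine (differentiableOn_id.sub_const w).inv fun z hz hzw => hw ?_
  rw [← sub_eq_zero.1 hzw]
  exact Metric.closure_ball_subset_closedBall hz

theorem circleIntegral_const_mul_sub_inv_sub_sub_inv {w₁ w₂ : ℂ} (hw₁ : ‖w₁‖ < 1)
    (hw₂ : 1 < ‖w₂‖) (k : ℂ) :
    (∮ z in C(0, 1), k * ((z - w₁)⁻¹ - (z - w₂)⁻¹)) = 2 * π * I * k := by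
  have hw₁' : w₁ ∈ Metric.ball 0 1 := by simpa using hw₁
  have hw₂' : w₂ ∉ Metric.closedBall 0 1 := by simpa using hw₂
  rw [circleIntegral.integral_const_mul, circleIntegral.integral_sub,
    circleIntegral.integral_sub_inv_of_mem_ball hw₁',
    circleIntegral_sub_inv_of_notMem_closedBall zero_le_one hw₂']
  · ring
  all_goals simp [hw₁.ne, hw₂.ne']

/-- With `z = e^{iθ}`, `(z⁻¹ - z) i / 2 = sin θ` and `z i = dz/dθ`. -/
theorem inv_add_mul_sin_eq {c d s z w₁ w₂ : ℂ} (hd : d ≠ 0) (hs : s ≠ 0)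
    (hsq : s ^ 2 = c ^ 2 - d ^ 2) (hw₁ : d * w₁ = I * (s - c)) (hw₂ : d * w₂ = -I * (s + c))
    (hz : z ≠ 0) (hz₁ : z ≠ w₁) (hz₂ : z ≠ w₂) :
    (c + d * ((z⁻¹ - z) * I / 2))⁻¹ =
      z * I * (-I / s * ((z - w₁)⁻¹ - (z - w₂)⁻¹)) := by
  have hprod : w₁ * w₂ = -1 := by
    refine mul_left_cancel₀ (pow_ne_zero 2 hd) ?_
    linear_combination w₂ * d * hw₁ + I * (s - c) * hw₂ + hsq + (c ^ 2 - s ^ 2) * I_sq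
  have hsum : d * (w₁ + w₂) = -2 * I * c := by linear_combination hw₁ + hw₂
  have hdiff : d * (w₁ - w₂) = 2 * I * s := by linear_combination hw₁ - hw₂
  have h₁ := sub_ne_zero.2 hz₁
  have h₂ := sub_ne_zero.2 hz₂
  have hfac : c + d * ((z⁻¹ - z) * I / 2) = -I * d * (z - w₁) * (z - w₂) / (2 * z) := by
    field_simp
    linear_combination (-I * z) * hsum + I * d * hprod + 2 * c * z * I_sq
  rw [hfac, inv_sub_inv h₁ h₂]
  field_simp
  linear_combination I ^ 3 * hdiff + 2 * s * (I ^ 2 - 1) * I_sq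

end CircleIntegral

theorem sq_sub_sq_pos_of_abs_lt {c d : ℝ} (h : |d| < c) : 0 < c ^ 2 - d ^ 2 :=
  sub_pos.2 (sq_lt_sq' (abs_lt.1 h).1 (abs_lt.1 h).2)

theorem add_mul_sin_pos {c d : ℝ} (h : |d| < c) (θ : ℝ) : 0 < c + d * Real.sin θ := by
  have : |d * Real.sin θ| ≤ |d| := by
    rw [abs_mul]
    exact mul_le_of_le_one_right (abs_nonneg d) (abs_sin_le_one θ)
  linarith [neg_abs_le (d * Real.sin θ)]

open Complex in
theorem integral_one_div_add_mul_sin {c d : ℝ} (h : |d| < c) :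
    ∫ θ in (0)..(2 * π), 1 / (c + d * Real.sin θ) = 2 * π / √(c ^ 2 - d ^ 2) := by
  have hc : 0 < c := (abs_nonneg d).trans_lt h
  rcases eq_or_ne d 0 with rfl | hd
  · simp [sqrt_sq hc.le, div_eq_mul_inv]
  have hsq := sq_sub_sq_pos_of_abs_lt h
  set s := √(c ^ 2 - d ^ 2)
  have hs : 0 < s := sqrt_pos.2 hsq
  have hs2 : s ^ 2 = c ^ 2 - d ^ 2 := sq_sqrt hsq.le
  have hd' : 0 < |d| := abs_pos.2 hd
  have hsc : s < c := by nlinarith [pow_pos hd' 2, sq_abs d]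
  have hdC : (d : ℂ) ≠ 0 := ofReal_ne_zero.2 hd
  set w₁ : ℂ := I * (s - c) / d
  set w₂ : ℂ := -I * (s + c) / d
  have hw₁ : ‖w₁‖ < 1 := by
    rw [norm_div, norm_mul, norm_I, one_mul, ← ofReal_sub, norm_real, norm_real, norm_eq_abs,
      norm_eq_abs, div_lt_one hd', abs_sub_comm, abs_of_pos (sub_pos.2 hsc)]
    nlinarith [sq_abs d]
  have hw₂ : 1 < ‖w₂‖ := by
    rw [norm_div, norm_mul, norm_neg, norm_I, one_mul, ← ofReal_add, norm_real, norm_real,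
      norm_eq_abs, norm_eq_abs, one_lt_div hd', abs_of_pos (show 0 < s + c by linarith)]
    linarith
  have hpt : ∀ θ : ℝ, ((1 / (c + d * Real.sin θ) : ℝ) : ℂ) = deriv (circleMap 0 1) θ •
      (-I / s * ((circleMap 0 1 θ - w₁)⁻¹ - (circleMap 0 1 θ - w₂)⁻¹)) := by
    intro θ
    have hz : ‖circleMap 0 1 θ‖ = 1 := by simp
    rw [deriv_circleMap, smul_eq_mul, ← inv_add_mul_sin_eq (c := c) (z := circleMap 0 1 θ)
      (w₁ := w₁) (w₂ := w₂) hdC (ofReal_ne_zero.2 hs.ne') (by exact_mod_cast hs2)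
      (mul_div_cancel₀ _ hdC) (mul_div_cancel₀ _ hdC) (by simp)
      (fun h => hw₁.ne (h ▸ hz)) (fun h => hw₂.ne' (h ▸ hz))]
    push_cast
    rw [one_div, circleMap_zero, ofReal_one, one_mul, Complex.sin, neg_mul, Complex.exp_neg]
  apply ofReal_injective
  rw [← intervalIntegral.integral_ofReal, intervalIntegral.integral_congr fun θ _ => hpt θ]
  refine (circleIntegral_const_mul_sub_inv_sub_sub_inv hw₁ hw₂ _).trans ?_
  have hs' : (s : ℂ) ≠ 0 := ofReal_ne_zero.2 hs.ne'
  push_cast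
  field_simp
  rw [I_sq, neg_neg]

theorem integral_one_div_add_mul_sin_two_pi_mul_div (a : ℝ) {c d : ℝ} (h : |d| < c) :
    ∫ x in (0)..a, 1 / (c + d * Real.sin (2 * π * x / a)) = a / √(c ^ 2 - d ^ 2) := by
  rcases eq_or_ne a 0 with rfl | ha
  · simp
  have hω : 2 * π / a ≠ 0 := div_ne_zero (by positivity) ha
  simp_rw [fun x => mul_div_right_comm (2 * π) x a]
  rw [intervalIntegral.integral_comp_mul_left (fun θ => 1 / (c + d * Real.sin θ)) hω, mul_zero,
    div_mul_cancel₀ _ ha, integral_one_div_add_mul_sin h, smul_eq_mul]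
  field_simp

theorem integral_two_mul_div_one_sub_sq {a μ τ : ℝ} (h_sub : |τ| < 1 - μ)
    (h_add : |τ| < 1 + μ) :
    ∫ x in (0)..a, 2 * (μ + τ * Real.sin (2 * π * x / a))
        / (1 - (μ + τ * Real.sin (2 * π * x / a)) ^ 2)
      = (1 / √((1 - μ) ^ 2 - τ ^ 2) - 1 / √((1 + μ) ^ 2 - τ ^ 2)) * a := by
  rw [← abs_neg] at h_sub
  have hcont : ∀ {c d : ℝ}, |d| < c →
      Continuous fun x => 1 / (c + d * Real.sin (2 * π * x / a)) :=
    fun h => continuous_const.div (by fun_prop) fun x => (add_mul_sin_pos h _).ne'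
  have hsplit : ∀ x, 2 * (μ + τ * Real.sin (2 * π * x / a))
        / (1 - (μ + τ * Real.sin (2 * π * x / a)) ^ 2)
      = 1 / ((1 - μ) + -τ * Real.sin (2 * π * x / a))
        - 1 / ((1 + μ) + τ * Real.sin (2 * π * x / a)) := by
    intro x
    rw [div_sub_div _ _ (add_mul_sin_pos h_sub _).ne' (add_mul_sin_pos h_add _).ne']
    ring
  simp_rw [hsplit]
  rw [intervalIntegral.integral_sub ((hcont h_sub).intervalIntegrable _ _)
    ((hcont h_add).intervalIntegrable _ _), integral_one_div_add_mul_sin_two_pi_mul_div a h_sub,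
    integral_one_div_add_mul_sin_two_pi_mul_div a h_add, neg_sq]
  ring

theorem sign_one_div_sqrt_sub_one_div_sqrt {u v : ℝ} (hu : 0 < u) (hv : 0 < v) :
    SignType.sign (1 / √u - 1 / √v) = SignType.sign (v - u) := by
  have hu' := sqrt_pos.2 hu
  have hv' := sqrt_pos.2 hv
  have hdiff : 1 / √u - 1 / √v = (v - u) * (√u * √v * (√u + √v))⁻¹ := by
    field_simp
    linear_combination sq_sqrt hv.le - sq_sqrt hu.le
  have hden : 0 < (√u * √v * (√u + √v))⁻¹ := by positivity
  rw [hdiff, sign_mul, sign_pos hden, mul_one]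

/-- For the oscillating force field `F(x) = μ + τ sin(2πx/a)` with `|μ+τ| < 1`
and `|μ-τ| < 1`, `J(a) = ∫₀ᵃ 2F/(1-F²) = [1/√((1-μ)²-τ²) - 1/√((1+μ)²-τ²)]·a`,
whose sign is the sign of `μ`. -/
theorem stmt_16 (a μ τ : ℝ) (ha : 0 < a)
    (h1 : |μ + τ| < 1) (h2 : |μ - τ| < 1)
    (F : ℝ → ℝ) (Ja : ℝ)
    (hF : ∀ x, F x = μ + τ * Real.sin (2 * Real.pi * x / a))
    (hJa : Ja = ∫ x in (0:ℝ)..a, 2 * F x / (1 - (F x) ^ 2)) :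
    Ja = (1 / Real.sqrt ((1 - μ) ^ 2 - τ ^ 2)
          - 1 / Real.sqrt ((1 + μ) ^ 2 - τ ^ 2)) * a ∧
    (0 < Ja ↔ 0 < μ) ∧ (Ja = 0 ↔ μ = 0) ∧ (Ja < 0 ↔ μ < 0) := by
  obtain rfl : F = fun x => μ + τ * Real.sin (2 * π * x / a) := funext hF
  obtain ⟨h1l, h1r⟩ := abs_lt.1 h1
  obtain ⟨h2l, h2r⟩ := abs_lt.1 h2
  have h_sub : |τ| < 1 - μ := abs_lt.2 ⟨by linarith, by linarith⟩
  have h_add : |τ| < 1 + μ := abs_lt.2 ⟨by linarith, by linarith⟩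
  have hJ := hJa.trans (integral_two_mul_div_one_sub_sq h_sub h_add)
  have hsign : SignType.sign Ja = SignType.sign μ := by
    rw [hJ, sign_mul, sign_pos ha, mul_one, sign_one_div_sqrt_sub_one_div_sqrt
      (sq_sub_sq_pos_of_abs_lt h_sub) (sq_sub_sq_pos_of_abs_lt h_add),
      show (1 + μ) ^ 2 - τ ^ 2 - ((1 - μ) ^ 2 - τ ^ 2) = 4 * μ by ring, sign_mul,
      sign_pos four_pos, one_mul]
  refine ⟨hJ, ?_, ?_, ?_⟩
  · rw [← sign_eq_one_iff, hsign, sign_eq_one_iff]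
  · rw [← _root_.sign_eq_zero_iff, hsign, _root_.sign_eq_zero_iff]
  · rw [← sign_eq_neg_one_iff, hsign, sign_eq_neg_one_iff]
end
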